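/- Let k ≥ 1 and i > k. If k + f(k) = i and (k+1) + f(k+1) > i + 1, then v_k is the unique Jaconian vertex of J_i(1), i.e. 𝕁(J_i(1)) = {k}. -/

import Mathlib

/- Since `d⁻(j) + f(j) = j` and `f` is monotone, `d_i(j) = j` for `j ≤ k` (all out-arcs of
`v_j` stay inside `J_i(1)`, as `j + f(j) ≤ k + f(k) = i`), while for `j > k` the out-arcs are cut
off at `i`, giving `d_i(j) = i - f(j) ≤ i - f(k + 1) < k`. -/

/-- The Jaco out-degree function `f`: `f 0 = 0` and, for `n ≥ 1`,
`f n = n - #{k : 1 ≤ k < n ∧ k + f k ≥ n}` (the out-degree of `v_n` in `J_∞(1)`). -/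
def jacoF : ℕ → ℕ
  | 0 => 0
  | n + 1 =>
    (n + 1) - ((Finset.range (n + 1)).attach.filter
      (fun a => 1 ≤ a.1 ∧ n + 1 ≤ a.1 + jacoF a.1)).card
  decreasing_by all_goals exact Finset.mem_range.mp a.2

/-- The in-degree `d⁻(j) = #{i : 1 ≤ i < j ∧ j ≤ i + f i}` of `v_j` in `J_∞(1)`. -/
def jacoDin (j : ℕ) : ℕ := ((Finset.Ico 1 j).filter (fun i => j ≤ i + jacoF i)).card

/-- The degree `d_n(j) = d⁻(j) + #{k : j < k ≤ n ∧ k ≤ j + f j}` of `v_j` in the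
underlying undirected graph of the finite Jaco graph `J_n(1)`. -/
def jacoDeg (n j : ℕ) : ℕ :=
  jacoDin j + ((Finset.Ioc j n).filter (fun k => k ≤ j + jacoF j)).card

/-- The maximum degree `Δ(J_n(1)) = max_{1 ≤ j ≤ n} d_n(j)`. -/
def jacoDelta (n : ℕ) : ℕ := (Finset.Icc 1 n).sup (jacoDeg n)

/-- The Jaconian set `𝕁(J_n(1)) = {j : 1 ≤ j ≤ n ∧ d_n(j) = Δ(J_n(1))}`. -/
def jacoJ (n : ℕ) : Finset ℕ := (Finset.Icc 1 n).filter (fun j => jacoDeg n j = jacoDelta n)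

theorem Finset.filter_eq_sup_eq_singleton {α β : Type*} [DecidableEq α] [LinearOrder β]
    [OrderBot β] {s : Finset α} {g : α → β} {a : α} (ha : a ∈ s)
    (hlt : ∀ b ∈ s, b ≠ a → g b < g a) :
    s.filter (fun b => g b = s.sup g) = {a} := by
  have hsup : s.sup g = g a :=
    le_antisymm (Finset.sup_le fun b hb => by
      rcases eq_or_ne b a with rfl | hba
      exacts [le_rfl, (hlt b hb hba).le]) (Finset.le_sup ha)
  ext b
  simp only [Finset.mem_filter, Finset.mem_singleton, hsup]
  constructor
  · rintro ⟨hb, hgb⟩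
    by_contra hba
    exact (hlt b hb hba).ne hgb
  · rintro rfl
    exact ⟨ha, rfl⟩

theorem jacoDin_lt_self {n : ℕ} (hn : 1 ≤ n) : jacoDin n < n := by
  have := Finset.card_filter_le (Finset.Ico 1 n) (fun i => n ≤ i + jacoF i)
  rw [Nat.card_Ico] at this
  unfold jacoDin
  omega

theorem jacoF_succ (n : ℕ) : jacoF (n + 1) = (n + 1) - jacoDin (n + 1) := by
  rw [jacoF, jacoDin, Finset.filter_attach (fun a => 1 ≤ a ∧ n + 1 ≤ a + jacoF a),
    Finset.card_map, Finset.card_attach]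
  congr 2
  ext x
  simp only [Finset.mem_filter, Finset.mem_range, Finset.mem_Ico]
  omega

theorem jacoDin_add_jacoF {n : ℕ} (hn : 1 ≤ n) : jacoDin n + jacoF n = n := by
  obtain ⟨m, rfl⟩ := Nat.exists_eq_add_of_le' hn
  have := jacoDin_lt_self hn
  rw [jacoF_succ]
  omega

theorem jacoDin_succ_le (n : ℕ) : jacoDin (n + 1) ≤ jacoDin n + 1 := by
  unfold jacoDin
  calc ((Finset.Ico 1 (n + 1)).filter (fun i => n + 1 ≤ i + jacoF i)).card
      ≤ ((Finset.Ico 1 n).filter (fun i => n ≤ i + jacoF i) ∪ {n}).card := by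
        apply Finset.card_le_card
        intro x hx
        simp only [Finset.mem_filter, Finset.mem_Ico, Finset.mem_union,
          Finset.mem_singleton] at *
        omega
    _ ≤ _ := (Finset.card_union_le _ _).trans (by rw [Finset.card_singleton])

theorem jacoF_mono : Monotone jacoF := by
  refine monotone_nat_of_le_succ fun n => ?_
  rcases Nat.eq_zero_or_pos n with rfl | hn
  · simp [jacoF]
  · have := jacoDin_add_jacoF hn
    have := jacoDin_add_jacoF (n := n + 1) (by omega)
    have := jacoDin_succ_le n
    omega

theorem jacoDeg_eq (n j : ℕ) : jacoDeg n j = jacoDin j + (min n (j + jacoF j) - j) := by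
  have : (Finset.Ioc j n).filter (fun k => k ≤ j + jacoF j)
      = Finset.Ioc j (min n (j + jacoF j)) := by
    ext x
    simp only [Finset.mem_filter, Finset.mem_Ioc, le_min_iff]
    omega
  rw [jacoDeg, this, Nat.card_Ioc]

theorem jacoDeg_of_add_jacoF_le {n j : ℕ} (hj : 1 ≤ j) (h : j + jacoF j ≤ n) :
    jacoDeg n j = j := by
  have := jacoDin_add_jacoF hj
  rw [jacoDeg_eq, min_eq_right h]
  omega

theorem jacoDeg_add_jacoF_of_le_add_jacoF {n j : ℕ} (hj : 1 ≤ j) (hjn : j ≤ n)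
    (h : n ≤ j + jacoF j) : jacoDeg n j + jacoF j = n := by
  have := jacoDin_add_jacoF hj
  rw [jacoDeg_eq, min_eq_left h]
  omega

/-- If `k + f k = i` and `(k+1) + f (k+1) > i + 1`, then `v_k` is the unique
Jaconian vertex of `J_i(1)`. -/
theorem stmt_8 (k i : ℕ) (hk : 1 ≤ k) (hki : k < i)
    (h1 : k + jacoF k = i) (h2 : (k + 1) + jacoF (k + 1) > i + 1) :
    jacoJ i = {k} := by
  have hdeg_k : jacoDeg i k = k := jacoDeg_of_add_jacoF_le hk h1.le
  have hdeg_lt : ∀ j ∈ Finset.Icc 1 i, j ≠ k → jacoDeg i j < jacoDeg i k := by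
    intro j hj hjk
    rw [Finset.mem_Icc] at hj
    rw [hdeg_k]
    rcases lt_or_gt_of_ne hjk with hlt | hgt
    · have := jacoF_mono hlt.le
      rw [jacoDeg_of_add_jacoF_le hj.1 (by omega)]
      exact hlt
    · have : jacoF (k + 1) ≤ jacoF j := jacoF_mono hgt
      have := jacoDeg_add_jacoF_of_le_add_jacoF hj.1 hj.2 (by omega)
      omega
  exact Finset.filter_eq_sup_eq_singleton (Finset.mem_Icc.mpr ⟨hk, hki.le⟩) hdeg_lt
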